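/- Let N and n be positive integers such that N does not divide n and N does not divide 2n. Define the 2N×2N real matrix J in block form J = [[G, B],[F, C]], where for j, k ∈ {1,…,N}: G_{jk} = cos(2πn(k−j)/N), B_{jk} = (1/2) sin(2πn(k−j)/N), F_{jk} = −2 sin(2πn(k−j)/N), and C_{jk} = cos(2πn(k−j)/N) − 1. (J is the Jacobian of the rescaled matrix Kuramoto flow linearized at the twist state with winding number n.) Then the characteristic polynomial of J is X^{2N−3}(X + N)(X − N)^2; equivalently, the eigenvalues of J are −N with multiplicity 1, N with multiplicity 2, and 0 with multiplicity 2N−3. In particular J has a positive eigenvalue, so the twist state is linearly unstable. -/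

import Mathlib

open Matrix Polynomial Real

/-- The `θ`-`θ` block of the twist-state Jacobian: `G_{jk} = cos(2πn(k−j)/N)`. -/
noncomputable def twistBlockG (N n : ℕ) : Matrix (Fin N) (Fin N) ℝ :=
  Matrix.of fun j k =>
    Real.cos (2 * Real.pi * (n : ℝ) * (((k : ℕ) : ℝ) - ((j : ℕ) : ℝ)) / (N : ℝ))

/-- The `θ`-`Δλ` block of the twist-state Jacobian: `B_{jk} = (1/2) sin(2πn(k−j)/N)`. -/
noncomputable def twistBlockB (N n : ℕ) : Matrix (Fin N) (Fin N) ℝ :=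
  Matrix.of fun j k =>
    (1 / 2 : ℝ) * Real.sin (2 * Real.pi * (n : ℝ) * (((k : ℕ) : ℝ) - ((j : ℕ) : ℝ)) / (N : ℝ))

/-- The `Δλ`-`θ` block of the twist-state Jacobian: `F_{jk} = −2 sin(2πn(k−j)/N)`. -/
noncomputable def twistBlockF (N n : ℕ) : Matrix (Fin N) (Fin N) ℝ :=
  Matrix.of fun j k =>
    (-2 : ℝ) * Real.sin (2 * Real.pi * (n : ℝ) * (((k : ℕ) : ℝ) - ((j : ℕ) : ℝ)) / (N : ℝ))

/-- The `Δλ`-`Δλ` block of the twist-state Jacobian: `C_{jk} = cos(2πn(k−j)/N) − 1`. -/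
noncomputable def twistBlockC (N n : ℕ) : Matrix (Fin N) (Fin N) ℝ :=
  Matrix.of fun j k =>
    Real.cos (2 * Real.pi * (n : ℝ) * (((k : ℕ) : ℝ) - ((j : ℕ) : ℝ)) / (N : ℝ)) - 1

/-- The Jacobian of the rescaled matrix Kuramoto flow linearized at the twist state
with winding number `n`. -/
noncomputable def twistJacobian (N n : ℕ) : Matrix (Fin N ⊕ Fin N) (Fin N ⊕ Fin N) ℝ :=
  Matrix.fromBlocks (twistBlockG N n) (twistBlockB N n) (twistBlockF N n) (twistBlockC N n)

/-!
All entries of the Jacobian are of the form `a cos(φ_k - φ_j) + b sin(φ_k - φ_j) + c` with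
`φ_j = 2πnj/N`, so expanding `cos(φ_k - φ_j)` and `sin(φ_k - φ_j)` factors it as `J = U V` with
`U` of size `2N × 5` and `V` of size `5 × 2N`. Hence `X⁵ χ_J = X^{2N} χ_{VU}`. The entries of the
`5 × 5` matrix `V U` are the sums `∑ cos φ_j`, `∑ sin φ_j`, `∑ cos² φ_j`, `∑ sin² φ_j`,
`∑ cos φ_j sin φ_j`, which are `0, 0, N/2, N/2, 0` because `N ∤ n` and `N ∤ 2n` make
`e^{iφ_j}` and `e^{2iφ_j}` run through nontrivial roots of unity. Up to reordering the basis,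
`V U` is block diagonal with two `2 × 2` blocks of trace `N` and determinant `0` and the entry
`-N`, so `χ_{VU} = X²(X + N)(X - N)²`.
-/

lemma sum_exp_two_pi_mul_div_mul_I_eq_zero {N m : ℕ} (h : ¬ N ∣ m) :
    ∑ j : Fin N, Complex.exp ((2 * π * m * j / N : ℝ) * Complex.I) = 0 := by
  rcases eq_or_ne N 0 with rfl | hN
  · simp
  have hζ := Complex.isPrimitiveRoot_exp N hN
  set ω := Complex.exp (2 * π * Complex.I / N) ^ m
  have hω : ω ^ N = 1 := by rw [pow_right_comm, hζ.pow_eq_one, one_pow]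
  have hω1 : ω ≠ 1 := fun h' => h ((hζ.pow_eq_one_iff_dvd m).1 h')
  calc ∑ j : Fin N, Complex.exp ((2 * π * m * j / N : ℝ) * Complex.I)
      = ∑ j : Fin N, ω ^ (j : ℕ) := by
        refine Finset.sum_congr rfl fun j _ => ?_
        rw [← pow_mul, ← Complex.exp_nat_mul]
        push_cast
        ring_nf
    _ = 0 := by rw [Fin.sum_univ_eq_sum_range, geom_sum_eq hω1, hω, sub_self, zero_div]

lemma sum_cos_two_pi_mul_div_eq_zero {N m : ℕ} (h : ¬ N ∣ m) :
    ∑ j : Fin N, cos (2 * π * m * j / N) = 0 := by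
  simpa only [Complex.re_sum, Complex.exp_ofReal_mul_I_re, Complex.zero_re] using
    congrArg Complex.re (sum_exp_two_pi_mul_div_mul_I_eq_zero h)

lemma sum_sin_two_pi_mul_div_eq_zero {N m : ℕ} (h : ¬ N ∣ m) :
    ∑ j : Fin N, sin (2 * π * m * j / N) = 0 := by
  simpa only [Complex.im_sum, Complex.exp_ofReal_mul_I_im, Complex.zero_im] using
    congrArg Complex.im (sum_exp_two_pi_mul_div_mul_I_eq_zero h)

/-- `twistPhase N n j = 4 θ_{j+1}` in terms of the eigenframe angles of the twist state. -/
noncomputable def twistPhase (N n : ℕ) (j : Fin N) : ℝ := 2 * π * n * j / N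

lemma two_mul_twistPhase (N n : ℕ) (j : Fin N) :
    2 * twistPhase N n j = 2 * π * (2 * n : ℕ) * j / N := by
  rw [twistPhase]; push_cast; ring

section PhaseSums

variable {N n : ℕ}

lemma sum_cos_sq_twistPhase (h2 : ¬ N ∣ 2 * n) :
    ∑ j, cos (twistPhase N n j) ^ 2 = N / 2 := by
  calc ∑ j, cos (twistPhase N n j) ^ 2
      = ∑ j : Fin N, (1 / 2 + cos (2 * π * (2 * n : ℕ) * j / N) / 2) := by
        refine Finset.sum_congr rfl fun j _ => ?_
        rw [cos_sq, two_mul_twistPhase]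
    _ = N / 2 := by
        rw [Finset.sum_add_distrib, Finset.sum_const, ← Finset.sum_div,
          sum_cos_two_pi_mul_div_eq_zero h2]
        simp [div_eq_mul_inv]

lemma sum_sin_sq_twistPhase (h2 : ¬ N ∣ 2 * n) :
    ∑ j, sin (twistPhase N n j) ^ 2 = N / 2 := by
  calc ∑ j, sin (twistPhase N n j) ^ 2
      = ∑ j : Fin N, (1 - cos (twistPhase N n j) ^ 2) := by
        refine Finset.sum_congr rfl fun j _ => ?_
        rw [sin_sq]
    _ = N / 2 := by
        rw [Finset.sum_sub_distrib, sum_cos_sq_twistPhase h2, Finset.sum_const,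
          Finset.card_univ, Fintype.card_fin, nsmul_one]
        ring

lemma sum_cos_mul_sin_twistPhase (h2 : ¬ N ∣ 2 * n) :
    ∑ j, cos (twistPhase N n j) * sin (twistPhase N n j) = 0 := by
  calc ∑ j, cos (twistPhase N n j) * sin (twistPhase N n j)
      = ∑ j : Fin N, sin (2 * π * (2 * n : ℕ) * j / N) / 2 := by
        refine Finset.sum_congr rfl fun j _ => ?_
        rw [← two_mul_twistPhase, sin_two_mul]
        ring
    _ = 0 := by rw [← Finset.sum_div, sum_sin_two_pi_mul_div_eq_zero h2, zero_div]

end PhaseSums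

section Factorization

variable (N n : ℕ)

noncomputable def twistLeftFactor : Matrix (Fin N ⊕ Fin N) (Fin 5) ℝ :=
  fromRows (of fun j => ![cos (twistPhase N n j), sin (twistPhase N n j), 0, 0, 0])
    (of fun j => ![0, 0, cos (twistPhase N n j), sin (twistPhase N n j), 1])

noncomputable def twistRightFactor : Matrix (Fin 5) (Fin N ⊕ Fin N) ℝ :=
  fromCols
    (of fun j => ![cos (twistPhase N n j), sin (twistPhase N n j),
      -2 * sin (twistPhase N n j), 2 * cos (twistPhase N n j), 0])ᵀ
    (of fun j => ![sin (twistPhase N n j) / 2, -cos (twistPhase N n j) / 2,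
      cos (twistPhase N n j), sin (twistPhase N n j), -1])ᵀ

lemma twistJacobian_eq_mul : twistJacobian N n = twistLeftFactor N n * twistRightFactor N n := by
  have hsub (j k : Fin N) : 2 * π * (n : ℝ) * (((k : ℕ) : ℝ) - ((j : ℕ) : ℝ)) / (N : ℝ)
      = twistPhase N n k - twistPhase N n j := by
    rw [twistPhase, twistPhase]; ring
  rw [twistJacobian, twistLeftFactor, twistRightFactor, fromRows_mul_fromCols]
  congr 1 <;> ext j k <;>
    simp only [twistBlockG, twistBlockB, twistBlockF, twistBlockC, hsub, cos_sub, sin_sub,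
      of_apply, mul_apply, transpose_apply, Fin.sum_univ_five, cons_val_zero, cons_val_one,
      cons_val] <;>
    ring

noncomputable def twistReducedMatrix : Matrix (Fin 5) (Fin 5) ℝ :=
  !![(N : ℝ) / 2, 0, 0, (N : ℝ) / 4, 0;
     0, (N : ℝ) / 2, -((N : ℝ) / 4), 0, 0;
     0, -(N : ℝ), (N : ℝ) / 2, 0, 0;
     (N : ℝ), 0, 0, (N : ℝ) / 2, 0;
     0, 0, 0, 0, -(N : ℝ)]

variable {N n} in
lemma twistRightFactor_mul_twistLeftFactor (h1 : ¬ N ∣ n) (h2 : ¬ N ∣ 2 * n) :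
    twistRightFactor N n * twistLeftFactor N n = twistReducedMatrix N := by
  have hC : ∑ j, cos (twistPhase N n j) = 0 := sum_cos_two_pi_mul_div_eq_zero h1
  have hS : ∑ j, sin (twistPhase N n j) = 0 := sum_sin_two_pi_mul_div_eq_zero h1
  have hCC := sum_cos_sq_twistPhase h2
  have hSS := sum_sin_sq_twistPhase h2
  have hCS := sum_cos_mul_sin_twistPhase h2
  rw [twistLeftFactor, twistRightFactor, fromCols_mul_fromRows]
  ext i k
  fin_cases i <;> fin_cases k <;>
    simp [twistReducedMatrix, mul_apply, ← sq, mul_comm (sin _) (cos _), mul_assoc,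
      div_mul_eq_mul_div, neg_div, ← Finset.sum_div, ← Finset.mul_sum, hC, hS, hCC, hSS, hCS] <;>
    ring

lemma charpoly_twistReducedMatrix :
    (twistReducedMatrix N).charpoly = X ^ 2 * (X + C (N : ℝ)) * (X - C (N : ℝ)) ^ 2 := by
  refine Polynomial.funext fun t => ?_
  rw [eval_charpoly]
  simp [twistReducedMatrix, det_succ_row_zero, Fin.sum_univ_succ, Fin.succAbove]
  ring

end Factorization

theorem twist_state_jacobian_charpoly_general
    (N n : ℕ) (hN : 0 < N) (h1 : ¬ N ∣ n) (h2 : ¬ N ∣ 2 * n) :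
    (twistJacobian N n).charpoly
        = X ^ (2 * N - 3) * (X + Polynomial.C (N : ℝ)) * (X - Polynomial.C (N : ℝ)) ^ 2
      ∧ ∃ x : ℝ, 0 < x ∧ (twistJacobian N n).charpoly.IsRoot x := by
  have hN3 : 3 ≤ N := by
    by_contra! h
    interval_cases N
    · exact h1 (one_dvd n)
    · exact h2 (dvd_mul_right 2 n)
  have hcharpoly : (twistJacobian N n).charpoly
      = X ^ (2 * N - 3) * (X + Polynomial.C (N : ℝ)) * (X - Polynomial.C (N : ℝ)) ^ 2 := by
    rw [twistJacobian_eq_mul, charpoly_mul_comm_of_le _ _ (by simp; omega),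
      twistRightFactor_mul_twistLeftFactor h1 h2, charpoly_twistReducedMatrix]
    have h5 : 2 * N - 3 = 2 * N - 5 + 2 := by omega
    simp only [Fintype.card_sum, Fintype.card_fin, ← two_mul, h5, pow_add]
    ring
  exact ⟨hcharpoly, N, Nat.cast_pos.mpr hN, by simp [hcharpoly]⟩

/-- if `N ∤ n` and `N ∤ 2n`, the characteristic polynomial of the twist-state
Jacobian `J` is `X^{2N−3}(X + N)(X − N)²`, i.e. the eigenvalues are `−N` (multiplicity 1),
`N` (multiplicity 2) and `0` (multiplicity `2N−3`); in particular `J` has a positive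
eigenvalue, so the twist state is linearly unstable. -/
theorem twist_state_jacobian_charpoly
    (N n : ℕ) (hN : 0 < N) (hn : 0 < n) (h1 : ¬ N ∣ n) (h2 : ¬ N ∣ 2 * n) :
    (twistJacobian N n).charpoly
        = X ^ (2 * N - 3) * (X + Polynomial.C (N : ℝ)) * (X - Polynomial.C (N : ℝ)) ^ 2
      ∧ ∃ x : ℝ, 0 < x ∧ (twistJacobian N n).charpoly.IsRoot x :=
  twist_state_jacobian_charpoly_general N n hN h1 h2
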